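/- arXiv:1904.13215 — 3 statements merged into one kernel-verified Lean document; each statement's English description precedes it below -/
import Mathlib

section
/- For a feed-forward ReLU network, if a decision pattern is ≺-closed (i.e., for every neuron constrained by the pattern, all neurons feeding into it are also constrained), then the set of inputs satisfying the pattern is convex: it is an intersection of finitely many open and closed half-spaces of the form W·X + b > 0 and W·X + b ≤ 0. -/
open Finset

/-- A layered feed-forward ReLU network with `n` inputs and neurons indexed by `ι`.
Neurons at depth 0 read the input; neurons at deeper layers read all neurons of the
previous layer.  Every neuron applies `ReLU = max 0` to an affine combination. -/
structure ReluNet (n : ℕ) (ι : Type) [Fintype ι] where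
  depth : ι → ℕ
  wIn : ι → Fin n → ℝ
  w : ι → ι → ℝ
  b : ι → ℝ
  val : ι → (Fin n → ℝ) → ℝ
  val_input : ∀ N, depth N = 0 → ∀ X,
    val N X = max 0 ((∑ i, wIn N i * X i) + b N)
  val_hidden : ∀ N, depth N ≠ 0 → ∀ X,
    val N X = max 0 ((∑ M ∈ Finset.univ.filter (fun M => depth M + 1 = depth N),
      w N M * val M X) + b N)

variable {n : ℕ} {ι : Type} [Fintype ι]

/-- An input `X` satisfies a decision pattern `σ` (a partial assignment of ON/OFF
statuses to neurons) if every ON neuron has positive output and every OFF neuron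
has zero output on `X`. -/
def ReluNet.Sat (net : ReluNet n ι) (σ : ι → Option Bool) (X : Fin n → ℝ) : Prop :=
  (∀ N, σ N = some true → 0 < net.val N X) ∧
  (∀ N, σ N = some false → net.val N X = 0)

/-- A pattern is ≺-closed if whenever it constrains a neuron, it also constrains every
neuron feeding into it (i.e. every neuron in an earlier layer). -/
def ReluNet.PrecClosed (net : ReluNet n ι) (σ : ι → Option Bool) : Prop :=
  ∀ N M, σ N ≠ none → net.depth M < net.depth N → σ M ≠ none

def affEv (p : (Fin n → ℝ) × ℝ) (X : Fin n → ℝ) : ℝ := (∑ j, p.1 j * X j) + p.2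

noncomputable def ReluNet.aff (net : ReluNet n ι) (σ : ι → Option Bool) :
    ℕ → ι → (Fin n → ℝ) × ℝ
  | 0, N => (net.wIn N, net.b N)
  | d + 1, N =>
      (∑ M ∈ Finset.univ.filter (fun M => net.depth M = d ∧ σ M = some true),
          fun j => net.w N M * (net.aff σ d M).1 j,
       (∑ M ∈ Finset.univ.filter (fun M => net.depth M = d ∧ σ M = some true),
          net.w N M * (net.aff σ d M).2) + net.b N)

lemma affEv_aff_succ (net : ReluNet n ι) (σ : ι → Option Bool) (d : ℕ) (N : ι)
    (X : Fin n → ℝ) :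
    affEv (net.aff σ (d + 1) N) X =
      (∑ M ∈ Finset.univ.filter (fun M => net.depth M = d ∧ σ M = some true),
        net.w N M * affEv (net.aff σ d M) X) + net.b N := by
  simp only [affEv, ReluNet.aff, Finset.sum_apply]
  rw [Finset.sum_congr rfl (fun j _ => Finset.sum_mul _ _ _), Finset.sum_comm]
  simp only [mul_add, Finset.sum_add_distrib, Finset.mul_sum]
  ring_nf

lemma ReluNet.val_eq_max (net : ReluNet n ι) (σ : ι → Option Bool) (hσ : net.PrecClosed σ)
    (X : Fin n → ℝ)
    (H : ∀ M, (σ M = some true →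
          0 < net.val M X ∨ 0 < affEv (net.aff σ (net.depth M) M) X) ∧
        (σ M = some false →
          net.val M X = 0 ∨ affEv (net.aff σ (net.depth M) M) X ≤ 0)) :
    ∀ d N, net.depth N = d → σ N ≠ none →
      net.val N X = max 0 (affEv (net.aff σ d N) X) := by
  intro d
  induction d with
  | zero =>
    intro N hN _
    rw [net.val_input N hN]
    simp [affEv, ReluNet.aff]
  | succ d ih =>
    intro N hN hσN
    rw [net.val_hidden N (by omega) X, affEv_aff_succ]
    congr 2
    have hfil : Finset.univ.filter (fun M => net.depth M + 1 = net.depth N)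
        = Finset.univ.filter (fun M => net.depth M = d) := by
      apply Finset.filter_congr; intro M _; simp [hN]
    rw [hfil]
    have key : ∀ M, net.depth M = d →
        net.w N M * net.val M X =
          if σ M = some true then net.w N M * affEv (net.aff σ d M) X else 0 := by
      intro M hM
      have hσM : σ M ≠ none := hσ N M hσN (by omega)
      have hval := ih M hM hσM
      rcases hb : σ M with _ | b
      · exact absurd hb hσM
      rcases b with _ | _
      · -- false
        rw [if_neg (by simp)]
        have := (H M).2 hb
        rw [hM] at this
        rcases this with h0 | hle
        · rw [h0, mul_zero]
        · rw [hval, max_eq_left hle, mul_zero]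
      · -- true
        rw [if_pos rfl]
        have := (H M).1 hb
        rw [hM] at this
        rcases this with hpos | hpos
        · rw [hval] at hpos ⊢
          have : 0 < affEv (net.aff σ d M) X := by
            by_contra hc
            push_neg at hc
            rw [max_eq_left hc] at hpos
            exact lt_irrefl _ hpos
          rw [max_eq_right this.le]
        · rw [hval, max_eq_right hpos.le]
    calc (∑ M ∈ Finset.univ.filter (fun M => net.depth M = d), net.w N M * net.val M X)
        = ∑ M ∈ Finset.univ.filter (fun M => net.depth M = d),
            (if σ M = some true then net.w N M * affEv (net.aff σ d M) X else 0) := by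
          apply Finset.sum_congr rfl
          intro M hM
          exact key M (by simpa using hM)
      _ = ∑ M ∈ Finset.univ.filter (fun M => net.depth M = d ∧ σ M = some true),
            net.w N M * affEv (net.aff σ d M) X := by
          rw [Finset.sum_filter]
          rw [Finset.sum_filter]
          apply Finset.sum_congr rfl
          intro M _
          by_cases h1 : net.depth M = d <;> by_cases h2 : σ M = some true <;> simp [h1, h2]

lemma ReluNet.sat_iff (net : ReluNet n ι) (σ : ι → Option Bool) (hσ : net.PrecClosed σ)
    (X : Fin n → ℝ) :
    net.Sat σ X ↔
      ((∀ N, σ N = some true → 0 < affEv (net.aff σ (net.depth N) N) X) ∧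
       (∀ N, σ N = some false → affEv (net.aff σ (net.depth N) N) X ≤ 0)) := by
  constructor
  · rintro ⟨h1, h2⟩
    have H : ∀ M, (σ M = some true →
          0 < net.val M X ∨ 0 < affEv (net.aff σ (net.depth M) M) X) ∧
        (σ M = some false →
          net.val M X = 0 ∨ affEv (net.aff σ (net.depth M) M) X ≤ 0) :=
      fun M => ⟨fun h => Or.inl (h1 M h), fun h => Or.inl (h2 M h)⟩
    have key := net.val_eq_max σ hσ X H
    constructor
    · intro N hN
      have hv := key (net.depth N) N rfl (by simp [hN])
      have := h1 N hN
      rw [hv] at this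
      rcases lt_max_iff.1 this with h | h
      · exact absurd h (lt_irrefl 0)
      · exact h
    · intro N hN
      have hv := key (net.depth N) N rfl (by simp [hN])
      have := h2 N hN
      rw [hv] at this
      by_contra hc
      push_neg at hc
      rw [max_eq_right hc.le] at this
      exact absurd this (ne_of_gt hc)
  · rintro ⟨h1, h2⟩
    have H : ∀ M, (σ M = some true →
          0 < net.val M X ∨ 0 < affEv (net.aff σ (net.depth M) M) X) ∧
        (σ M = some false →
          net.val M X = 0 ∨ affEv (net.aff σ (net.depth M) M) X ≤ 0) :=
      fun M => ⟨fun h => Or.inr (h1 M h), fun h => Or.inr (h2 M h)⟩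
    have key := net.val_eq_max σ hσ X H
    constructor
    · intro N hN
      have hv := key (net.depth N) N rfl (by simp [hN])
      rw [hv, max_eq_right (h1 N hN).le]
      exact h1 N hN
    · intro N hN
      have hv := key (net.depth N) N rfl (by simp [hN])
      rw [hv, max_eq_left (h2 N hN)]


/-- the set of inputs satisfying a ≺-closed decision pattern is a finite
intersection of open half-spaces `W·X + b > 0` and closed half-spaces `W·X + b ≤ 0`,
and in particular it is convex. -/
theorem prec_closed_pattern_convex (net : ReluNet n ι) (σ : ι → Option Bool)
    (hσ : net.PrecClosed σ) :
    (∃ (k₁ k₂ : ℕ) (W₁ : Fin k₁ → Fin n → ℝ) (b₁ : Fin k₁ → ℝ)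
        (W₂ : Fin k₂ → Fin n → ℝ) (b₂ : Fin k₂ → ℝ),
      {X | net.Sat σ X} =
        {X : Fin n → ℝ | (∀ i, 0 < (∑ j, W₁ i j * X j) + b₁ i) ∧
          (∀ i, (∑ j, W₂ i j * X j) + b₂ i ≤ 0)}) ∧
    Convex ℝ {X | net.Sat σ X} := by
  classical
  set s₁ := Finset.univ.filter (fun N => σ N = some true) with hs₁
  set s₂ := Finset.univ.filter (fun N => σ N = some false) with hs₂
  let e₁ : Fin s₁.card ≃ s₁ := s₁.equivFin.symm
  let e₂ : Fin s₂.card ≃ s₂ := s₂.equivFin.symm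
  have ht : ∀ (P : ι → Prop), (∀ i, P (e₁ i)) ↔ (∀ N, σ N = some true → P N) := by
    intro P
    constructor
    · intro h N hN
      have hNmem : N ∈ s₁ := by simp [hs₁, hN]
      have := h (e₁.symm ⟨N, hNmem⟩)
      simpa using this
    · intro h i
      have h2 := (e₁ i).2
      exact h _ (Finset.mem_filter.mp h2).2
  have hf : ∀ (P : ι → Prop), (∀ i, P (e₂ i)) ↔ (∀ N, σ N = some false → P N) := by
    intro P
    constructor
    · intro h N hN
      have hNmem : N ∈ s₂ := by simp [hs₂, hN]
      have := h (e₂.symm ⟨N, hNmem⟩)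
      simpa using this
    · intro h i
      have h2 := (e₂ i).2
      exact h _ (Finset.mem_filter.mp h2).2
  have hset : {X | net.Sat σ X} =
      {X : Fin n → ℝ |
        (∀ i, 0 < (∑ j, (net.aff σ (net.depth (e₁ i : ι)) (e₁ i : ι)).1 j * X j)
            + (net.aff σ (net.depth (e₁ i : ι)) (e₁ i : ι)).2) ∧
        (∀ i, (∑ j, (net.aff σ (net.depth (e₂ i : ι)) (e₂ i : ι)).1 j * X j)
            + (net.aff σ (net.depth (e₂ i : ι)) (e₂ i : ι)).2 ≤ 0)} := by
    ext X
    simp only [Set.mem_setOf_eq]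
    rw [net.sat_iff σ hσ X]
    exact and_congr
      ((ht (fun N => 0 < affEv (net.aff σ (net.depth N) N) X)).symm)
      ((hf (fun N => affEv (net.aff σ (net.depth N) N) X ≤ 0)).symm)
  constructor
  · exact ⟨s₁.card, s₂.card,
      fun i => (net.aff σ (net.depth (e₁ i : ι)) (e₁ i : ι)).1,
      fun i => (net.aff σ (net.depth (e₁ i : ι)) (e₁ i : ι)).2,
      fun i => (net.aff σ (net.depth (e₂ i : ι)) (e₂ i : ι)).1,
      fun i => (net.aff σ (net.depth (e₂ i : ι)) (e₂ i : ι)).2, hset⟩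
  · rw [hset]
    intro X hX Y hY a b ha hb hab
    have lin : ∀ (W : Fin n → ℝ) (c : ℝ),
        (∑ j, W j * (a • X + b • Y) j) + c
          = a * ((∑ j, W j * X j) + c) + b * ((∑ j, W j * Y j) + c) := by
      intro W c
      have hsum : (∑ j, W j * (a • X + b • Y) j)
          = a * (∑ j, W j * X j) + b * (∑ j, W j * Y j) := by
        rw [Finset.mul_sum, Finset.mul_sum, ← Finset.sum_add_distrib]
        apply Finset.sum_congr rfl
        intro j _
        simp only [Pi.add_apply, Pi.smul_apply, smul_eq_mul]
        ring
      rw [hsum]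
      linear_combination (-c) * hab
    constructor
    · intro i
      rw [lin]
      rcases eq_or_lt_of_le ha with ha0 | ha0
      · have hb1 : b = 1 := by linarith
        rw [← ha0, hb1]
        simpa using hY.1 i
      · exact add_pos_of_pos_of_nonneg (mul_pos ha0 (hX.1 i))
          (mul_nonneg hb (hY.1 i).le)
    · intro i
      rw [lin]
      nlinarith [mul_nonneg ha (neg_nonneg.2 (hX.2 i)),
        mul_nonneg hb (neg_nonneg.2 (hY.2 i))]
end

section
/- For every neuron N constrained by a ≺-closed decision pattern σ of a feed-forward ReLU network, there exist a vector W and a scalar b such that for all inputs X satisfying σ, N(X) = ReLU(W·X + b). -/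
open Finset

variable {n : ℕ} {ι : Type} [Fintype ι]

/-- for every neuron constrained by a ≺-closed pattern `σ`, there are
weights `W` and a bias `b` such that on all inputs satisfying `σ` the neuron's output
equals `ReLU(W·X + b)`. -/
theorem neuron_affine_on_prec_closed (net : ReluNet n ι) (σ : ι → Option Bool)
    (hσ : net.PrecClosed σ) (N : ι) (hN : σ N ≠ none) :
    ∃ (W : Fin n → ℝ) (b : ℝ), ∀ X, net.Sat σ X →
      net.val N X = max 0 ((∑ i, W i * X i) + b) := by
  classical
  suffices h : ∀ d N, net.depth N ≤ d → σ N ≠ none → ∃ (W : Fin n → ℝ) (b : ℝ),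
      ∀ X, net.Sat σ X → net.val N X = max 0 ((∑ i, W i * X i) + b) by
    exact h (net.depth N) N le_rfl hN
  intro d
  induction d with
  | zero =>
    intro N hd _
    exact ⟨net.wIn N, net.b N, fun X _ => net.val_input N (Nat.le_zero.mp hd) X⟩
  | succ d ih =>
    intro N hd hN
    by_cases h0 : net.depth N = 0
    · exact ⟨net.wIn N, net.b N, fun X _ => net.val_input N h0 X⟩
    · have haff : ∀ M, ∃ (W : Fin n → ℝ) (c : ℝ),
          net.depth M + 1 = net.depth N → ∀ X, net.Sat σ X →
          net.val M X = (∑ i, W i * X i) + c := by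
        intro M
        by_cases hM : net.depth M + 1 = net.depth N
        · have hMσ : σ M ≠ none := hσ N M hN (by omega)
          obtain ⟨W, c, hWc⟩ := ih M (by omega) hMσ
          cases hb : σ M with
          | none => exact absurd hb hMσ
          | some bb =>
            cases bb with
            | true =>
              refine ⟨W, c, fun _ X hX => ?_⟩
              have hpos := hX.1 M hb
              rw [hWc X hX] at hpos ⊢
              rcases lt_max_iff.mp hpos with h | h
              · exact absurd h (lt_irrefl 0)
              · exact max_eq_right h.le
            | false =>
              refine ⟨fun _ => 0, 0, fun _ X hX => ?_⟩
              rw [hX.2 M hb]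
              simp
        · exact ⟨fun _ => 0, 0, fun h => absurd h hM⟩
      choose W c hWc using haff
      refine ⟨fun i => ∑ M ∈ Finset.univ.filter (fun M => net.depth M + 1 = net.depth N),
        net.w N M * W M i,
        (∑ M ∈ Finset.univ.filter (fun M => net.depth M + 1 = net.depth N),
          net.w N M * c M) + net.b N, fun X hX => ?_⟩
      rw [net.val_hidden N h0 X]
      congr 1
      have hrw : ∀ M ∈ Finset.univ.filter (fun M => net.depth M + 1 = net.depth N),
          net.w N M * net.val M X = net.w N M * ((∑ i, W M i * X i) + c M) := by
        intro M hM
        rw [hWc M (by simpa using hM) X hX]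
      rw [Finset.sum_congr rfl hrw]
      simp only [mul_add, Finset.sum_add_distrib, Finset.mul_sum, Finset.sum_mul,
        mul_assoc]
      rw [Finset.sum_comm, add_assoc]
end

section
/- The greedy iterative-relaxation algorithm returns a minimal pattern: starting from the activation signature σ_X (which implies P) and repeatedly removing a neuron constraint only when the resulting sub-pattern still implies P, the final pattern σ satisfies (∀X', σ(X') → P(F(X'))) and no proper sub-pattern obtained by unconstraining any single remaining neuron implies P. -/
open Finset

variable {n : ℕ} {ι : Type} [Fintype ι]

/-- The network output: a linear combination of neuron outputs (weights for neurons
not in the final layer may be zero). -/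
def ReluNet.F (net : ReluNet n ι) {m : ℕ} (outW : Fin m → ι → ℝ) (outB : Fin m → ℝ)
    (X : Fin n → ℝ) : Fin m → ℝ :=
  fun k => (∑ N, outW k N * net.val N X) + outB k

/-- The activation signature of an input `X`: the total pattern marking each neuron
ON if its output on `X` is positive and OFF otherwise. -/
noncomputable def ReluNet.sig (net : ReluNet n ι) (X : Fin n → ℝ) : ι → Option Bool :=
  fun N => if 0 < net.val N X then some true else some false

variable [DecidableEq ι]

/-- `σ` implies the output property `P`. -/
def ReluNet.Implies (net : ReluNet n ι) {m : ℕ} (outW : Fin m → ι → ℝ)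
    (outB : Fin m → ℝ) (P : Set (Fin m → ℝ)) (σ : ι → Option Bool) : Prop :=
  ∀ X, net.Sat σ X → net.F outW outB X ∈ P

/-- Remove (unconstrain) the neuron `N` from the pattern `σ`. -/
def removeNeuron (σ : ι → Option Bool) (N : ι) : ι → Option Bool :=
  fun M => if M = N then none else σ M

open Classical in
/-- One greedy step: tentatively unconstrain `N`, keeping the removal only if the
resulting sub-pattern still implies `P`. -/
noncomputable def greedyStep (net : ReluNet n ι) {m : ℕ} (outW : Fin m → ι → ℝ)
    (outB : Fin m → ℝ) (P : Set (Fin m → ℝ)) (σ : ι → Option Bool) (N : ι) :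
    ι → Option Bool :=
  if net.Implies outW outB P (removeNeuron σ N) then removeNeuron σ N else σ

set_option linter.unusedSectionVars false

/-- `σ'` is a restriction (sub-pattern) of `σ`: wherever `σ'` constrains, it agrees. -/
def Refines (σ' σ : ι → Option Bool) : Prop := ∀ M, σ' M ≠ none → σ' M = σ M

lemma refines_refl (σ : ι → Option Bool) : Refines σ σ := fun _ _ => rfl

lemma sat_of_refines (net : ReluNet n ι) {σ' σ : ι → Option Bool} (h : Refines σ' σ)
    {X : Fin n → ℝ} (hs : net.Sat σ X) : net.Sat σ' X := by
  constructor
  · intro N hN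
    exact hs.1 N ((h N (by simp [hN])).symm.trans hN)
  · intro N hN
    exact hs.2 N ((h N (by simp [hN])).symm.trans hN)

lemma implies_of_refines (net : ReluNet n ι) {m : ℕ} (outW : Fin m → ι → ℝ)
    (outB : Fin m → ℝ) (P : Set (Fin m → ℝ)) {σ' σ : ι → Option Bool}
    (h : Refines σ' σ) (h' : net.Implies outW outB P σ') :
    net.Implies outW outB P σ :=
  fun X hs => h' X (sat_of_refines net h hs)

lemma remove_refines (σ : ι → Option Bool) (N : ι) : Refines (removeNeuron σ N) σ := by
  intro M hM
  unfold removeNeuron at *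
  by_cases h : M = N <;> simp [h] at hM ⊢

lemma refines_remove {σ' σ : ι → Option Bool} (h : Refines σ' σ) (N : ι) :
    Refines (removeNeuron σ' N) (removeNeuron σ N) := by
  intro M hM
  unfold removeNeuron at *
  by_cases hMN : M = N <;> simp [hMN] at hM ⊢
  exact h M hM

lemma greedyStep_refines (net : ReluNet n ι) {m : ℕ} (outW : Fin m → ι → ℝ)
    (outB : Fin m → ℝ) (P : Set (Fin m → ℝ)) (σ : ι → Option Bool) (N : ι) :
    Refines (greedyStep net outW outB P σ N) σ := by
  unfold greedyStep
  split
  · exact remove_refines σ N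
  · exact refines_refl σ

lemma refines_trans {σ₁ σ₂ σ₃ : ι → Option Bool} (h₁ : Refines σ₁ σ₂)
    (h₂ : Refines σ₂ σ₃) : Refines σ₁ σ₃ := by
  intro M hM
  have e := h₁ M hM
  rw [e]
  exact h₂ M (e ▸ hM)

lemma foldl_refines (net : ReluNet n ι) {m : ℕ} (outW : Fin m → ι → ℝ)
    (outB : Fin m → ℝ) (P : Set (Fin m → ℝ)) (l : List ι) (σ : ι → Option Bool) :
    Refines (l.foldl (greedyStep net outW outB P) σ) σ := by
  induction l generalizing σ with
  | nil => exact refines_refl σ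
  | cons a l ih =>
      exact refines_trans (ih _) (greedyStep_refines net outW outB P σ a)

lemma greedyStep_implies (net : ReluNet n ι) {m : ℕ} (outW : Fin m → ι → ℝ)
    (outB : Fin m → ℝ) (P : Set (Fin m → ℝ)) {σ : ι → Option Bool} (N : ι)
    (h : net.Implies outW outB P σ) :
    net.Implies outW outB P (greedyStep net outW outB P σ N) := by
  unfold greedyStep
  split
  · assumption
  · exact h

lemma foldl_implies (net : ReluNet n ι) {m : ℕ} (outW : Fin m → ι → ℝ)
    (outB : Fin m → ℝ) (P : Set (Fin m → ℝ)) (l : List ι) {σ : ι → Option Bool}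
    (h : net.Implies outW outB P σ) :
    net.Implies outW outB P (l.foldl (greedyStep net outW outB P) σ) := by
  induction l generalizing σ with
  | nil => exact h
  | cons a l ih => exact ih (greedyStep_implies net outW outB P a h)

/-- the greedy iterative-relaxation algorithm, started from the
activation signature of an input `X` (assumed to imply `P`) and processing every
neuron once, returns a pattern that still implies `P` and is minimal: unconstraining
any single remaining neuron invalidates the implication. -/
theorem greedy_relaxation_minimal (net : ReluNet n ι) {m : ℕ}
    (outW : Fin m → ι → ℝ) (outB : Fin m → ℝ) (P : Set (Fin m → ℝ))
    (X : Fin n → ℝ) (order : List ι)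
    (h₀ : net.Implies outW outB P (net.sig X))
    (horder : ∀ N : ι, N ∈ order) :
    net.Implies outW outB P (order.foldl (greedyStep net outW outB P) (net.sig X)) ∧
    ∀ N, (order.foldl (greedyStep net outW outB P) (net.sig X)) N ≠ none →
      ¬ net.Implies outW outB P
        (removeNeuron (order.foldl (greedyStep net outW outB P) (net.sig X)) N) := by
  refine ⟨foldl_implies net outW outB P order h₀, ?_⟩
  intro N hN hcontra
  obtain ⟨l₁, l₂, rfl⟩ := List.append_of_mem (horder N)
  set g := greedyStep net outW outB P with hg
  have hfold : (l₁ ++ N :: l₂).foldl g (net.sig X)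
      = l₂.foldl g (g (l₁.foldl g (net.sig X)) N) := by
    rw [List.foldl_append, List.foldl_cons]
  set σ₁ := l₁.foldl g (net.sig X) with hσ₁
  set σ₂ := g σ₁ N with hσ₂
  set fin := l₂.foldl g σ₂ with hfin
  rw [hfold] at hN hcontra
  have href : Refines fin σ₂ := foldl_refines net outW outB P l₂ σ₂
  have hσ₂N : σ₂ N ≠ none := fun h => hN ((href N hN).trans h)
  by_cases h : net.Implies outW outB P (removeNeuron σ₁ N)
  · have : σ₂ = removeNeuron σ₁ N := by rw [hσ₂, hg]; unfold greedyStep; simp [h]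
    exact hσ₂N (by simp [this, removeNeuron])
  · have hσ₂eq : σ₂ = σ₁ := by rw [hσ₂, hg]; unfold greedyStep; simp [h]
    exact h (implies_of_refines net outW outB P
      (refines_remove (hσ₂eq ▸ href) N) hcontra)
end
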